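/- Let n ≥ 1, let R be a commutative ring, let x_1, …, x_n be invertible elements of R with x̄_i := x_i^{−1}, and let a = (a_1, a_2, …) be any sequence in R. Then det_{1≤i,j≤n} ( (x_i|a)^{n−j} + (x̄_i|a)^{n−j} ) = 2 · ∏_{1≤i<j≤n} (x_i + x̄_i − x_j − x̄_j); in particular this determinant is independent of the sequence a. -/

import Mathlib

open Finset

noncomputable def geom {R : Type*} [CommRing R] (x : R) : PowerSeries R :=
  PowerSeries.mk fun k => x ^ k

noncomputable def lin {R : Type*} [CommRing R] (a : R) : PowerSeries R :=
  1 + PowerSeries.C a * PowerSeries.X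

noncomputable def facpow {R : Type*} [CommRing R] (x : R) (a : ℕ → R) (m : ℕ) : R :=
  ∏ j ∈ Finset.range m, (x + a (j + 1))

noncomputable def hgl {R : Type*} [CommRing R] {n : ℕ} (x : Fin n → R) (a : ℕ → R) (m : ℤ) : R :=
  if 0 ≤ m then
    PowerSeries.coeff m.toNat
      ((∏ i, geom (x i)) * ∏ j ∈ Finset.range (n + m.toNat - 1), lin (a (j + 1)))
  else 0

noncomputable def hsp {R : Type*} [CommRing R] {n : ℕ} (x : Fin n → Rˣ) (a : ℕ → R) (m : ℤ) : R :=
  if 0 ≤ m then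
    PowerSeries.coeff m.toNat
      ((∏ i, geom ((x i : R)) * geom (((x i)⁻¹ : Rˣ) : R)) *
        ∏ j ∈ Finset.range (n + m.toNat - 1), lin (a (j + 1)))
  else 0

noncomputable def hoo {R : Type*} [CommRing R] {n : ℕ} (x : Fin n → Rˣ) (a : ℕ → R) (m : ℤ) : R :=
  if 0 ≤ m then
    PowerSeries.coeff m.toNat
      ((1 + PowerSeries.X) * (∏ i, geom ((x i : R)) * geom (((x i)⁻¹ : Rˣ) : R)) *
        ∏ j ∈ Finset.range (n + m.toNat - 1), lin (a (j + 1)))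
  else 0

noncomputable def heo {R : Type*} [CommRing R] {n : ℕ} (x : Fin n → Rˣ) (a : ℕ → R) (m : ℤ) : R :=
  if 0 ≤ m then
    if h : n = 1 then
      (PowerSeries.coeff m.toNat
        ((geom ((x ⟨0, by omega⟩ : Rˣ) : R) + geom (((x ⟨0, by omega⟩)⁻¹ : Rˣ) : R)) *
          ∏ j ∈ Finset.range m.toNat, lin (a (j + 1))))
        - (if m = 0 then 1 else 0)
    else
      PowerSeries.coeff m.toNat
        ((1 - PowerSeries.X ^ 2) * (∏ i, geom ((x i : R)) * geom (((x i)⁻¹ : Rˣ) : R)) *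
          ∏ j ∈ Finset.range (n + m.toNat - 1), lin (a (j + 1)))
  else 0

noncomputable def heod {R : Type*} [CommRing R] {n : ℕ} (x : Fin n → Rˣ) (a : ℕ → R) (m : ℤ) : R :=
  if 0 < m then
    if h : 0 < n then
      PowerSeries.coeff m.toNat
        ((geom ((x ⟨0, h⟩ : Rˣ) : R) - geom (((x ⟨0, h⟩)⁻¹ : Rˣ) : R)) *
          (∏ i ∈ Finset.univ.filter (fun i : Fin n => i ≠ ⟨0, h⟩),
            geom ((x i : R)) * geom (((x i)⁻¹ : Rˣ) : R)) *
          ∏ j ∈ Finset.range (n + m.toNat - 1), lin (a (j + 1)))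
    else 0
  else 0

/-!
Expand `facpow u a m = F_m(u)` in powers of `u`. Since `D_k(u + u⁻¹) = u ^ k + u⁻ᵏ` for the
Dickson polynomials `D_k = dickson 1 1 k`, replacing each `X ^ k` in `F_m` by `D_k` gives a
polynomial `Q_m` with `Q_m(u + u⁻¹) = F_m(u) + F_m(u⁻¹)`; it is `2` for `m = 0` and monic of degree
`m` otherwise. The matrix is therefore the evaluation matrix of `Q_0, …, Q_{n-1}` at the points
`x_i + x_i⁻¹` (up to reversing rows and columns), which factors as a Vandermonde matrix times an
upper unitriangular coefficient matrix with `2` in the corner, and none of this depends on `a`.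
-/

namespace Polynomial

variable {R : Type*} [CommRing R]

theorem natDegree_dickson_le (k : ℕ) (a : R) (n : ℕ) : (dickson k a n).natDegree ≤ n := by
  induction n using Nat.twoStepInduction with
  | zero => simpa only [dickson_zero] using (natDegree_sub_le _ _).trans (by simp)
  | one => simpa only [dickson_one] using natDegree_X_le
  | more n ih₀ ih₁ =>
    rw [dickson_add_two]
    refine (natDegree_sub_le _ _).trans (max_le ?_ ?_)
    · exact (natDegree_mul_le_of_le natDegree_X_le ih₁).trans (by omega)
    · exact (natDegree_C_mul_le _ _).trans (by omega)

theorem coeff_dickson_self (k : ℕ) (a : R) {n : ℕ} (hn : n ≠ 0) : (dickson k a n).coeff n = 1 := by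
  obtain ⟨n, rfl⟩ := Nat.exists_eq_add_one_of_ne_zero hn
  induction n with
  | zero => simp [dickson_one]
  | succ n ih =>
    rw [dickson_add_two, coeff_sub, coeff_X_mul, ih n.succ_ne_zero, coeff_C_mul,
      coeff_eq_zero_of_natDegree_lt ((natDegree_dickson_le k a n).trans_lt (by omega)),
      mul_zero, sub_zero]

noncomputable def dicksonTransform (p : R[X]) : R[X] :=
  ∑ k ∈ Finset.range (p.natDegree + 1), C (p.coeff k) * dickson 1 1 k

theorem eval_dicksonTransform (p : R[X]) {u v : R} (huv : u * v = 1) :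
    (dicksonTransform p).eval (u + v) = p.eval u + p.eval v := by
  rw [eval_eq_sum_range u, eval_eq_sum_range v, ← Finset.sum_add_distrib, dicksonTransform,
    eval_finsetSum]
  simp only [eval_mul, eval_C, dickson_one_one_eval_add_inv u v huv, mul_add]

theorem natDegree_dicksonTransform_le (p : R[X]) :
    (dicksonTransform p).natDegree ≤ p.natDegree :=
  natDegree_sum_le_of_forall_le _ _ fun k hk =>
    (natDegree_C_mul_le _ _).trans <|
      (natDegree_dickson_le 1 1 k).trans (Nat.lt_succ_iff.mp (Finset.mem_range.mp hk))

theorem coeff_dicksonTransform_of_natDegree_le {p : R[X]} {m : ℕ} (hp : p.natDegree ≤ m)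
    (hm : m ≠ 0) : (dicksonTransform p).coeff m = p.coeff m := by
  rw [dicksonTransform, finsetSum_coeff, Finset.sum_eq_single m]
  · rw [coeff_C_mul, coeff_dickson_self 1 1 hm, mul_one]
  · intro k hk hkm
    have hkm : k < m := lt_of_le_of_ne ((Finset.mem_range_succ_iff.mp hk).trans hp) hkm
    rw [coeff_C_mul, coeff_eq_zero_of_natDegree_lt ((natDegree_dickson_le 1 1 k).trans_lt hkm),
      mul_zero]
  · intro hm'
    rw [coeff_eq_zero_of_natDegree_lt (p := p) (by simpa using hm'), C_0, zero_mul, coeff_zero]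

@[simp]
theorem dicksonTransform_one : dicksonTransform (1 : R[X]) = 2 := by
  norm_num [dicksonTransform, dickson_zero]

noncomputable def facpowPoly (a : ℕ → R) (m : ℕ) : R[X] :=
  ∏ j ∈ Finset.range m, (X + C (a (j + 1)))

theorem eval_facpowPoly (a : ℕ → R) (m : ℕ) (u : R) : (facpowPoly a m).eval u = facpow u a m := by
  simp [facpowPoly, facpow, eval_prod]

theorem natDegree_facpowPoly_le (a : ℕ → R) (m : ℕ) : (facpowPoly a m).natDegree ≤ m :=
  (natDegree_prod_le _ _).trans <|
    (Finset.sum_le_card_nsmul _ _ 1 fun _ _ => natDegree_add_C.trans_le natDegree_X_le).trans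
      (by simp)

theorem coeff_facpowPoly_self (a : ℕ → R) (m : ℕ) : (facpowPoly a m).coeff m = 1 := by
  simpa [facpowPoly] using coeff_prod_of_natDegree_le (Finset.range m)
    (fun j => X + C (a (j + 1))) 1 fun _ _ => natDegree_add_C.trans_le natDegree_X_le

end Polynomial

open Polynomial

namespace Matrix

variable {R : Type*} [CommRing R]

theorem det_eval_eq_coeff_zero_mul_det_vandermonde {n : ℕ} [NeZero n] (v : Fin n → R)
    (p : Fin n → R[X]) (hdeg : ∀ j, (p j).natDegree ≤ j) (hcoeff : ∀ j ≠ 0, (p j).coeff j = 1) :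
    (of fun i j => (p j).eval (v i)).det = (p 0).coeff 0 * (vandermonde v).det := by
  have hupper : (of fun i j : Fin n => (p j).coeff i).IsUpperTriangular := fun i j hji =>
    coeff_eq_zero_of_natDegree_lt ((hdeg j).trans_lt hji)
  rw [eval_matrixOfPolynomials_eq_vandermonde_mul_matrixOfPolynomials v p hdeg, det_mul,
    det_of_isUpperTriangular hupper, mul_comm]
  exact congrArg (· * _) (Finset.prod_eq_single 0 (fun j _ hj => hcoeff j hj) (by simp))

end Matrix

theorem Fin.prod_prod_Ioi_rev {M : Type*} [CommMonoid M] {n : ℕ} (g : Fin n → Fin n → M) :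
    ∏ i : Fin n, ∏ j ∈ Finset.Ioi i, g (Fin.rev j) (Fin.rev i) =
      ∏ i : Fin n, ∏ j ∈ Finset.Ioi i, g i j := by
  have hinner : ∀ i : Fin n, (∏ j ∈ Finset.Ioi i, g (Fin.rev j) (Fin.rev i))
      = ∏ j ∈ Finset.Iio (Fin.rev i), g j (Fin.rev i) := by
    intro i
    refine Finset.prod_nbij' Fin.rev Fin.rev ?_ ?_ ?_ ?_ ?_ <;>
      simp [Fin.lt_rev_iff]
  simp_rw [hinner]
  rw [← Equiv.prod_comp Fin.revPerm.symm (fun i => ∏ j ∈ Finset.Iio (Fin.rev i), g j (Fin.rev i))]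
  simp only [Fin.revPerm_symm, Fin.revPerm_apply, Fin.rev_rev]
  exact Finset.prod_comm' (by simp)

theorem factorial_eo_denominator {R : Type*} [CommRing R] (n : ℕ) (hn : 1 ≤ n)
    (x : Fin n → Rˣ) (a : ℕ → R) :
    Matrix.det (Matrix.of fun i j : Fin n =>
        facpow ((x i : R)) a (n - 1 - (j : ℕ))
          + facpow ((((x i)⁻¹ : Rˣ) : R)) a (n - 1 - (j : ℕ))) =
      2 * ∏ i : Fin n, ∏ j ∈ Finset.Ioi i,
          ((x i : R) + (((x i)⁻¹ : Rˣ) : R) - (x j : R) - (((x j)⁻¹ : Rˣ) : R)) := by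
  have : NeZero n := ⟨by omega⟩
  set y : Fin n → R := fun i => (x i : R) + (((x i)⁻¹ : Rˣ) : R)
  set Q : Fin n → R[X] := fun j => dicksonTransform (facpowPoly a j)
  have hQ_natDegree (j : Fin n) : (Q j).natDegree ≤ j :=
    (natDegree_dicksonTransform_le _).trans (natDegree_facpowPoly_le a j)
  have hQ_coeff (j : Fin n) (hj : j ≠ 0) : (Q j).coeff j = 1 := by
    rw [coeff_dicksonTransform_of_natDegree_le (natDegree_facpowPoly_le a j)
      (Fin.val_ne_zero_iff.mpr hj), coeff_facpowPoly_self]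
  have hQ_zero : (Q 0).coeff 0 = 2 := by simp [Q, facpowPoly]
  have hM : (Matrix.of fun i j : Fin n =>
      facpow ((x i : R)) a (n - 1 - (j : ℕ)) + facpow ((((x i)⁻¹ : Rˣ) : R)) a (n - 1 - (j : ℕ))) =
      (Matrix.of fun i j => (Q j).eval (y (Fin.rev i))).submatrix Fin.revPerm Fin.revPerm := by
    ext i j
    simp [Q, y, eval_dicksonTransform _ (x i).mul_inv, eval_facpowPoly, Fin.val_rev, Nat.sub_sub,
      Nat.add_comm 1]
  rw [hM, Matrix.det_submatrix_equiv_self,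
    Matrix.det_eval_eq_coeff_zero_mul_det_vandermonde _ Q hQ_natDegree hQ_coeff, hQ_zero,
    Matrix.det_vandermonde, Fin.prod_prod_Ioi_rev fun i j => y i - y j]
  congr 1
  refine Finset.prod_congr rfl fun i _ => Finset.prod_congr rfl fun j _ => ?_
  ring
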